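/- (Proposition 1, fixed-point part.) If â ∈ ℝ^r is a global minimizer of the proximal objective F and â ≠ 0, then z ≠ 0, ‖â‖₂ + η λ*(â) = ‖z‖₂, and â = (1 − η λ*(â)/‖z‖₂) · z; in particular â is a positive scalar multiple of z and ‖z‖₂ > η λ*(â). -/

import Mathlib

open Real Filter

/-- Unnormalized multivariate Laplace kernel `Ψ(x | λ) = λ^r exp(−λ‖x‖₂)` on `ℝ^r`. -/
noncomputable def Psi (r : ℕ) (lam : ℝ) (x : EuclideanSpace ℝ (Fin r)) : ℝ :=
  lam ^ r * Real.exp (-lam * ‖x‖)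

/-- Slab posterior-inclusion weight `p*(x)`. -/
noncomputable def pstar (r : ℕ) (lam0 lam1 th : ℝ) (x : EuclideanSpace ℝ (Fin r)) : ℝ :=
  th * Psi r lam1 x / ((1 - th) * Psi r lam0 x + th * Psi r lam1 x)

/-- Adaptive shrinkage weight `λ*(x) = λ₁ p*(x) + λ₀ (1 − p*(x))`. -/
noncomputable def lamstar (r : ℕ) (lam0 lam1 th : ℝ) (x : EuclideanSpace ℝ (Fin r)) : ℝ :=
  lam1 * pstar r lam0 lam1 th x + lam0 * (1 - pstar r lam0 lam1 th x)

/-- Centered SSGL penalty `pen(x) = −λ₁‖x‖₂ + log(p*(0)/p*(x))`. -/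
noncomputable def pen (r : ℕ) (lam0 lam1 th : ℝ) (x : EuclideanSpace ℝ (Fin r)) : ℝ :=
  -lam1 * ‖x‖ + Real.log (pstar r lam0 lam1 th 0 / pstar r lam0 lam1 th x)

/-- The proximal objective `F(x) = (1/(2η))‖x − z‖₂² − pen(x)`. -/
noncomputable def Fobj (r : ℕ) (lam0 lam1 th η : ℝ)
    (z x : EuclideanSpace ℝ (Fin r)) : ℝ :=
  1 / (2 * η) * ‖x - z‖ ^ 2 - pen r lam0 lam1 th x

/-- Proposition 1, fixed-point part: a nonzero global minimizer `â` of `F`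
satisfies `z ≠ 0`, `‖â‖₂ + η λ*(â) = ‖z‖₂`, and `â = (1 − η λ*(â)/‖z‖₂) · z`;
in particular `â` is a positive scalar multiple of `z` and `‖z‖₂ > η λ*(â)`. -/
theorem stmt_7 (r : ℕ) (hr : 1 ≤ r) (lam0 lam1 th : ℝ)
    (hlam1 : 0 < lam1) (hlam : lam1 < lam0) (hth0 : 0 < th) (hth1 : th < 1)
    (η : ℝ) (hη : 0 < η) (z : EuclideanSpace ℝ (Fin r))
    (ahat : EuclideanSpace ℝ (Fin r))
    (hmin : ∀ x : EuclideanSpace ℝ (Fin r),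
      Fobj r lam0 lam1 th η z ahat ≤ Fobj r lam0 lam1 th η z x)
    (hne : ahat ≠ 0) :
    z ≠ 0 ∧
    ‖ahat‖ + η * lamstar r lam0 lam1 th ahat = ‖z‖ ∧
    ahat = (1 - η * lamstar r lam0 lam1 th ahat / ‖z‖) • z ∧
    (∃ c : ℝ, 0 < c ∧ ahat = c • z) ∧
    η * lamstar r lam0 lam1 th ahat < ‖z‖ := by
  have hlam0 : 0 < lam0 := hlam1.trans hlam
  have hth : 0 < 1 - th := by linarith
  set A : ℝ := (1 - th) * lam0 ^ r with hA
  set B : ℝ := th * lam1 ^ r with hB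
  have hApos : 0 < A := by positivity
  have hBpos : 0 < B := by positivity
  set Df : ℝ → ℝ := fun t => A * Real.exp (-lam0 * t) + B * Real.exp (-lam1 * t) with hDf
  have hDpos : ∀ t, 0 < Df t := fun t => by positivity
  -- pstar formula
  have hpstar : ∀ x : EuclideanSpace ℝ (Fin r),
      pstar r lam0 lam1 th x = B * Real.exp (-lam1 * ‖x‖) / Df ‖x‖ := by
    intro x
    simp only [pstar, Psi, hDf, hA, hB]
    ring_nf
  have hpstar_pos : ∀ x : EuclideanSpace ℝ (Fin r), 0 < pstar r lam0 lam1 th x := by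
    intro x; rw [hpstar]
    have := hDpos ‖x‖
    positivity
  -- pen formula
  set C : ℝ := Real.log (pstar r lam0 lam1 th 0) - Real.log B with hC
  have hpen : ∀ x : EuclideanSpace ℝ (Fin r),
      pen r lam0 lam1 th x = C + Real.log (Df ‖x‖) := by
    intro x
    have h1 : Real.log (pstar r lam0 lam1 th 0 / pstar r lam0 lam1 th x)
        = Real.log (pstar r lam0 lam1 th 0) - Real.log (pstar r lam0 lam1 th x) :=
      Real.log_div (hpstar_pos 0).ne' (hpstar_pos x).ne'
    have h2 : Real.log (pstar r lam0 lam1 th x)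
        = Real.log B + (-lam1 * ‖x‖) - Real.log (Df ‖x‖) := by
      rw [hpstar, Real.log_div (by positivity) (hDpos _).ne',
        Real.log_mul hBpos.ne' (Real.exp_ne_zero _), Real.log_exp]
    simp only [pen, h1, h2, hC]; ring
  -- Fobj formula
  have hF : ∀ x : EuclideanSpace ℝ (Fin r), Fobj r lam0 lam1 th η z x
      = 1 / (2 * η) * ‖x - z‖ ^ 2 - C - Real.log (Df ‖x‖) := by
    intro x; rw [Fobj, hpen]; ring
  have hna : 0 < ‖ahat‖ := norm_pos_iff.mpr hne
  -- Df strictly decreasing from 0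
  have hDlt : ∀ t : ℝ, 0 < t → Df t < Df 0 := by
    intro t ht
    have h0 : Real.exp (-lam0 * t) < 1 := exp_lt_one_iff.mpr (by nlinarith)
    have h1 : Real.exp (-lam1 * t) < 1 := exp_lt_one_iff.mpr (by nlinarith)
    simp only [hDf, mul_zero, neg_zero, Real.exp_zero, mul_one]
    nlinarith
  -- z ≠ 0
  have hzne : z ≠ 0 := by
    intro hz
    have hlt : Fobj r lam0 lam1 th η z 0 < Fobj r lam0 lam1 th η z ahat := by
      rw [hF, hF]
      subst hz
      simp only [sub_zero, norm_zero]
      have h1 := Real.log_lt_log (hDpos ‖ahat‖) (hDlt ‖ahat‖ hna)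
      have h2 : 0 < 1 / (2 * η) * ‖ahat‖ ^ 2 := by positivity
      nlinarith
    exact absurd (hmin 0) (not_le.mpr hlt)
  have hnz : 0 < ‖z‖ := norm_pos_iff.mpr hzne
  -- the unit direction
  set u : EuclideanSpace ℝ (Fin r) := ‖z‖⁻¹ • z with hu
  have hnormu : ‖u‖ = 1 := norm_smul_inv_norm hzne
  have hsmul : ∀ t : ℝ, 0 ≤ t → ‖t • u‖ = t ∧ ‖t • u - z‖ = |t - ‖z‖| := by
    intro t ht
    constructor
    · rw [norm_smul, hnormu, Real.norm_eq_abs, abs_of_nonneg ht, mul_one]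
    · have : t • u - z = (t / ‖z‖ - 1) • z := by
        rw [hu, smul_smul, sub_smul, one_smul, div_eq_mul_inv]
      rw [this, norm_smul, Real.norm_eq_abs]
      rw [show t / ‖z‖ - 1 = (t - ‖z‖) / ‖z‖ by field_simp]
      rw [abs_div, abs_of_pos hnz, div_mul_cancel₀ _ hnz.ne']
  -- norm equality for ahat
  have hkey : ‖ahat - z‖ ^ 2 = (‖ahat‖ - ‖z‖) ^ 2 := by
    have hle : |‖ahat‖ - ‖z‖| ≤ ‖ahat - z‖ := abs_norm_sub_norm_le ahat z
    have h2 : (‖ahat‖ - ‖z‖) ^ 2 ≤ ‖ahat - z‖ ^ 2 := by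
      rw [← sq_abs (‖ahat‖ - ‖z‖)]
      exact pow_le_pow_left₀ (abs_nonneg _) hle 2
    have h3 : ‖ahat - z‖ ^ 2 ≤ (‖ahat‖ - ‖z‖) ^ 2 := by
      have hm := hmin (‖ahat‖ • u)
      obtain ⟨hn1, hn2⟩ := hsmul ‖ahat‖ hna.le
      rw [hF, hF, hn1, hn2] at hm
      have h4 : 1 / (2 * η) * ‖ahat - z‖ ^ 2 ≤ 1 / (2 * η) * |‖ahat‖ - ‖z‖| ^ 2 := by
        linarith
      rw [sq_abs] at h4
      have h5 : 0 < 1 / (2 * η) := by positivity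
      exact le_of_mul_le_mul_left (by linarith) h5
    linarith
  -- ahat is a nonnegative multiple of z
  have hinner : (inner ℝ ahat z : ℝ) = ‖ahat‖ * ‖z‖ := by
    have := norm_sub_sq_real ahat z
    nlinarith [hkey]
  have hcol : ahat = (‖ahat‖ / ‖z‖) • z := by
    have h := inner_eq_norm_mul_iff_real.mp hinner
    rw [div_eq_inv_mul, ← smul_smul, ← h, smul_smul, inv_mul_cancel₀ hnz.ne', one_smul]
  -- one-dimensional objective
  set G : ℝ → ℝ := fun t => 1 / (2 * η) * (t - ‖z‖) ^ 2 - C - Real.log (Df t) with hG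
  have hGF : ∀ t : ℝ, 0 ≤ t → G t = Fobj r lam0 lam1 th η z (t • u) := by
    intro t ht
    obtain ⟨hn1, hn2⟩ := hsmul t ht
    rw [hF, hn1, hn2, hG, sq_abs]
  have hGa : Fobj r lam0 lam1 th η z ahat = G ‖ahat‖ := by
    rw [hF, hG, hkey]
  have hlocal : IsLocalMin G ‖ahat‖ := by
    filter_upwards [eventually_gt_nhds hna] with t ht
    rw [← hGa, hGF t ht.le]
    exact hmin _
  -- derivative of G
  have hq : HasDerivAt (fun t : ℝ => 1 / (2 * η) * (t - ‖z‖) ^ 2)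
      (1 / (2 * η) * (2 * (‖ahat‖ - ‖z‖))) ‖ahat‖ := by
    have h1 : HasDerivAt (fun t : ℝ => t - ‖z‖) 1 ‖ahat‖ :=
      (hasDerivAt_id _).sub_const _
    have h2 := (h1.pow 2).const_mul (1 / (2 * η))
    simpa using h2
  have hd : HasDerivAt Df (A * (Real.exp (-lam0 * ‖ahat‖) * -lam0)
      + B * (Real.exp (-lam1 * ‖ahat‖) * -lam1)) ‖ahat‖ := by
    have h0 : HasDerivAt (fun t : ℝ => -lam0 * t) (-lam0) ‖ahat‖ := by
      simpa using (hasDerivAt_id ‖ahat‖).const_mul (-lam0)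
    have h1 : HasDerivAt (fun t : ℝ => -lam1 * t) (-lam1) ‖ahat‖ := by
      simpa using (hasDerivAt_id ‖ahat‖).const_mul (-lam1)
    exact ((h0.exp.const_mul A).add (h1.exp.const_mul B))
  have hGd : HasDerivAt G
      (1 / (2 * η) * (2 * (‖ahat‖ - ‖z‖)) - (A * (Real.exp (-lam0 * ‖ahat‖) * -lam0)
        + B * (Real.exp (-lam1 * ‖ahat‖) * -lam1)) / Df ‖ahat‖)
      ‖ahat‖ := by
    exact (hq.sub_const C).sub (hd.log (hDpos ‖ahat‖).ne')
  have hDne := (hDpos ‖ahat‖).ne'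
  have hzero := hlocal.hasDerivAt_eq_zero hGd
  have hDval : Df ‖ahat‖ = A * Real.exp (-lam0 * ‖ahat‖) + B * Real.exp (-lam1 * ‖ahat‖) := rfl
  have hls : lamstar r lam0 lam1 th ahat
      = (lam0 * (A * Real.exp (-lam0 * ‖ahat‖)) + lam1 * (B * Real.exp (-lam1 * ‖ahat‖)))
        / Df ‖ahat‖ := by
    rw [lamstar, hpstar]
    rw [hDval]
    have e0 := Real.exp_pos (-lam0 * ‖ahat‖)
    have e1 := Real.exp_pos (-lam1 * ‖ahat‖)
    have hne : A * Real.exp (-lam0 * ‖ahat‖) + B * Real.exp (-lam1 * ‖ahat‖) ≠ 0 := by positivity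
    field_simp
    ring
  have hmu : lamstar r lam0 lam1 th ahat * Df ‖ahat‖
      = lam0 * (A * Real.exp (-lam0 * ‖ahat‖)) + lam1 * (B * Real.exp (-lam1 * ‖ahat‖)) := by
    rw [hls, div_mul_cancel₀ _ hDne]
  have h4 := sub_eq_zero.mp hzero
  have h7 : (A * (Real.exp (-lam0 * ‖ahat‖) * -lam0)
      + B * (Real.exp (-lam1 * ‖ahat‖) * -lam1)) / Df ‖ahat‖
      = -(lamstar r lam0 lam1 th ahat) := by
    rw [hls]; ring
  rw [h7] at h4
  have hηne := hη.ne'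
  field_simp at h4
  have heq : ‖ahat‖ + η * lamstar r lam0 lam1 th ahat = ‖z‖ := by
    linear_combination h4
  have hscal : 1 - η * lamstar r lam0 lam1 th ahat / ‖z‖ = ‖ahat‖ / ‖z‖ := by
    field_simp
    linarith
  refine ⟨hzne, heq, ?_, ⟨‖ahat‖ / ‖z‖, by positivity, hcol⟩, by linarith⟩
  rw [hscal]
  exact hcol
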